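/- arXiv:2512.24039 — 3 statements merged into one kernel-verified Lean document; each statement's English description precedes it below -/
import Mathlib

section
/- Let $g : [-1,1] \to \mathbb{R}$ be Lipschitz continuous with Chebyshev coefficients $\{a_n\}$ and let $g_{\le p}(x) := \sum_{n=0}^p a_n T_n(x)$ be the degree-$p$ Chebyshev partial sum. With $r(\kappa) := \int_{-1}^1 g(x) e^{\mathrm{i}\kappa x} w(x)\,dx$ and $r_{\le p}(\kappa) := \int_{-1}^1 g_{\le p}(x) e^{\mathrm{i}\kappa x} w(x)\,dx$, for all $\kappa \in \mathbb{R}$ one has the uniform truncation bound $|r(\kappa) - r_{\le p}(\kappa)| \le \frac{\pi}{\sqrt{2}} \big(\sum_{n > p} a_n^2\big)^{1/2} = \sqrt{\pi}\, \|g - g_{\le p}\|_w$. -/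
/-! The difference of the two transforms is the transform of the tail `h = g - g_{≤p}`, so its
modulus is at most `∫ |h| w`, which Cauchy–Schwarz against the weight (`∫ w = π`) bounds by
`√π ‖h‖_w`. Because the Chebyshev series converges absolutely and `|T_n| ≤ 1`, it can be
integrated term by term against `T_m w`; the orthogonality relations `∫ T_n T_m w = (π/2) δ_{nm}`
(`m ≠ 0`) then give Parseval's identity `‖h‖_w² = (π/2) ∑_{n>p} a_n²`. -/

open MeasureTheory Real

noncomputable def chebT (n : ℕ) (x : ℝ) : ℝ := Real.cos (n * Real.arccos x)

noncomputable def chebW (x : ℝ) : ℝ := 1 / Real.sqrt (1 - x ^ 2)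

open Set Function

lemma chebW_nonneg (x : ℝ) : 0 ≤ chebW x := by unfold chebW; positivity

lemma chebT_one (n : ℕ) : chebT n 1 = 1 := by simp [chebT]

lemma abs_chebT_le_one (n : ℕ) (x : ℝ) : |chebT n x| ≤ 1 := abs_cos_le_one _

lemma continuous_chebT (n : ℕ) : Continuous (chebT n) := by unfold chebT; fun_prop

lemma hasDerivAt_arcsin_chebW {x : ℝ} (hx : x ∈ Ioo (-1 : ℝ) 1) :
    HasDerivAt arcsin (chebW x) x :=
  hasDerivAt_arcsin hx.1.ne' hx.2.ne

lemma integrableOn_chebW : IntegrableOn chebW (Ioc (-1) 1) :=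
  intervalIntegral.integrableOn_deriv_of_nonneg continuous_arcsin.continuousOn
    (fun _ hx => hasDerivAt_arcsin_chebW hx) fun x _ => chebW_nonneg x

lemma intervalIntegrable_chebW : IntervalIntegrable chebW volume (-1) 1 :=
  (intervalIntegrable_iff_integrableOn_Ioc_of_le (by norm_num)).2 integrableOn_chebW

lemma integral_chebW : ∫ x in (-1 : ℝ)..1, chebW x = π := by
  rw [intervalIntegral.integral_eq_sub_of_hasDerivAt_of_le (by norm_num)
    continuous_arcsin.continuousOn (fun _ hx => hasDerivAt_arcsin_chebW hx)
    intervalIntegrable_chebW, arcsin_one, arcsin_neg_one]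
  ring

lemma ContinuousOn.intervalIntegrable_mul_chebW {f : ℝ → ℝ} (hf : ContinuousOn f (Icc (-1) 1)) :
    IntervalIntegrable (fun x => f x * chebW x) volume (-1) 1 :=
  (intervalIntegrable_iff_integrableOn_Ioc_of_le (by norm_num)).2 <|
    integrableOn_chebW.continuousOn_mul_of_subset hf isCompact_Icc measurableSet_Ioc
      Ioc_subset_Icc_self

lemma intervalIntegrable_cos_mul_arccos_mul_chebW (c : ℝ) :
    IntervalIntegrable (fun x => cos (c * arccos x) * chebW x) volume (-1) 1 :=
  (continuous_cos.comp (continuous_const.mul continuous_arccos)).continuousOn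
    |>.intervalIntegrable_mul_chebW

lemma integral_cos_mul_arccos_mul_chebW {c : ℝ} (hc : c ≠ 0) :
    ∫ x in (-1 : ℝ)..1, cos (c * arccos x) * chebW x = sin (c * π) / c := by
  have hderiv : ∀ x ∈ Ioo (-1 : ℝ) 1,
      HasDerivAt (fun y => -sin (c * arccos y) / c) (cos (c * arccos x) * chebW x) x := by
    intro x hx
    refine ((hasDerivAt_arccos hx.1.ne' hx.2.ne).const_mul c).sin.neg.div_const c
      |>.congr_deriv ?_
    unfold chebW
    field_simp
  rw [intervalIntegral.integral_eq_sub_of_hasDerivAt_of_le (by norm_num) (by fun_prop) hderiv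
    (intervalIntegrable_cos_mul_arccos_mul_chebW c),
    arccos_one, arccos_neg_one, mul_zero, sin_zero, neg_zero, zero_div, zero_sub]
  ring

lemma integral_cos_int_mul_arccos_mul_chebW {k : ℤ} (hk : k ≠ 0) :
    ∫ x in (-1 : ℝ)..1, cos (k * arccos x) * chebW x = 0 := by
  rw [integral_cos_mul_arccos_mul_chebW (Int.cast_ne_zero.2 hk), sin_int_mul_pi, zero_div]

lemma integral_chebT_mul_chebT_mul_chebW (n : ℕ) {m : ℕ} (hm : m ≠ 0) :
    ∫ x in (-1 : ℝ)..1, chebT n x * chebT m x * chebW x = if n = m then π / 2 else 0 := by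
  have hprod (x : ℝ) : chebT n x * chebT m x * chebW x =
      (cos (((n + m : ℤ) : ℝ) * arccos x) * chebW x
        + cos (((n - m : ℤ) : ℝ) * arccos x) * chebW x) / 2 := by
    simp only [chebT, Int.cast_add, Int.cast_sub, Int.cast_natCast, add_mul, sub_mul, cos_add,
      cos_sub]
    ring
  simp_rw [hprod]
  rw [intervalIntegral.integral_div,
    intervalIntegral.integral_add (intervalIntegrable_cos_mul_arccos_mul_chebW _)
      (intervalIntegrable_cos_mul_arccos_mul_chebW _),
    integral_cos_int_mul_arccos_mul_chebW (by omega)]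
  split_ifs with hnm
  · simp [hnm, integral_chebW]
  · rw [integral_cos_int_mul_arccos_mul_chebW (by omega)]
    simp

section ChebyshevSeries

variable {ι : Type*} {c : ι → ℝ} {m : ι → ℕ} {h : ℝ → ℝ}

lemma continuousOn_of_hasSum_chebT (hc : Summable fun k => |c k|)
    (hsum : ∀ x ∈ Icc (-1 : ℝ) 1, HasSum (fun k => c k * chebT (m k) x) (h x)) :
    ContinuousOn h (Icc (-1) 1) := by
  refine (continuousOn_tsum (fun k => ((continuous_chebT (m k)).const_mul (c k)).continuousOn) hc
    fun k x _ => ?_).congr fun x hx => (hsum x hx).tsum_eq.symm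
  rw [norm_mul, Real.norm_eq_abs, Real.norm_eq_abs]
  exact mul_le_of_le_one_right (abs_nonneg _) (abs_chebT_le_one _ _)

lemma hasSum_integral_chebT_mul [Countable ι] {φ : ℝ → ℝ} (hc : Summable fun k => |c k|)
    (hsum : ∀ x ∈ Icc (-1 : ℝ) 1, HasSum (fun k => c k * chebT (m k) x) (h x))
    (hφ : IntervalIntegrable φ volume (-1) 1) :
    HasSum (fun k => c k * ∫ x in (-1 : ℝ)..1, chebT (m k) x * φ x)
      (∫ x in (-1 : ℝ)..1, h x * φ x) := by
  have hIoc : uIoc (-1 : ℝ) 1 = Ioc (-1) 1 := uIoc_of_le (by norm_num)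
  simp_rw [← intervalIntegral.integral_const_mul]
  refine intervalIntegral.hasSum_integral_of_dominated_convergence (fun k x => |c k| * |φ x|)
    (fun k => ?_) (fun k => ae_of_all _ fun x _ => ?_) (ae_of_all _ fun x _ => hc.mul_right _)
    ?_ (ae_of_all _ fun x hx => ?_)
  · exact ((continuous_chebT (m k)).aestronglyMeasurable.mul
      hφ.def'.aestronglyMeasurable).const_mul _
  · rw [norm_mul, norm_mul, Real.norm_eq_abs, Real.norm_eq_abs, Real.norm_eq_abs]
    exact mul_le_mul_of_nonneg_left (mul_le_of_le_one_left (abs_nonneg _) (abs_chebT_le_one _ _))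
      (abs_nonneg _)
  · simp_rw [tsum_mul_right]
    exact hφ.abs.const_mul _
  · rw [hIoc] at hx
    simpa only [mul_assoc] using (hsum x (Ioc_subset_Icc_self hx)).mul_right (φ x)

theorem hasSum_integral_sq_mul_chebW [Countable ι] (hm : Injective m) (hm0 : ∀ k, m k ≠ 0)
    (hc : Summable fun k => |c k|)
    (hsum : ∀ x ∈ Icc (-1 : ℝ) 1, HasSum (fun k => c k * chebT (m k) x) (h x)) :
    HasSum (fun k => π / 2 * c k ^ 2) (∫ x in (-1 : ℝ)..1, h x ^ 2 * chebW x) := by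
  classical
  have hcoeff (j : ι) : ∫ x in (-1 : ℝ)..1, h x * (chebT (m j) x * chebW x) = π / 2 * c j := by
    have H := hasSum_integral_chebT_mul hc hsum
      ((continuous_chebT (m j)).continuousOn.intervalIntegrable_mul_chebW)
    have hterm (k : ι) : c k * ∫ x in (-1 : ℝ)..1, chebT (m k) x * (chebT (m j) x * chebW x)
        = if k = j then π / 2 * c j else 0 := by
      simp only [← mul_assoc, integral_chebT_mul_chebT_mul_chebW _ (hm0 j), hm.eq_iff]
      split_ifs with hkj
      · rw [hkj, mul_comm]
      · rw [mul_zero]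
    exact H.unique (by simpa only [hterm] using hasSum_ite_eq j (π / 2 * c j))
  have H := hasSum_integral_chebT_mul hc hsum
    (continuousOn_of_hasSum_chebT hc hsum).intervalIntegrable_mul_chebW
  convert H using 1
  · ext k
    simp_rw [mul_left_comm (chebT (m k) _), hcoeff k]
    ring
  · congr 1
    ext x
    ring

end ChebyshevSeries

lemma integral_abs_mul_chebW_le {h : ℝ → ℝ} (hh : ContinuousOn h (Icc (-1) 1)) :
    ∫ x in (-1 : ℝ)..1, |h x| * chebW x ≤ √π * √(∫ x in (-1 : ℝ)..1, h x ^ 2 * chebW x) := by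
  set A := ∫ x in (-1 : ℝ)..1, h x ^ 2 * chebW x
  set B := ∫ x in (-1 : ℝ)..1, |h x| * chebW x
  have hint_sq : IntervalIntegrable (fun x => h x ^ 2 * chebW x) volume (-1) 1 :=
    (hh.pow 2).intervalIntegrable_mul_chebW
  have hint_abs := hh.abs.intervalIntegrable_mul_chebW
  have hexpand : ∫ x in (-1 : ℝ)..1, (π * |h x| - B) ^ 2 * chebW x = π * (π * A - B ^ 2) := by
    have hpt (x : ℝ) : (π * |h x| - B) ^ 2 * chebW x
        = π ^ 2 * (h x ^ 2 * chebW x) - 2 * π * B * (|h x| * chebW x) + B ^ 2 * chebW x := by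
      rw [← sq_abs (h x)]
      ring
    simp_rw [hpt]
    rw [intervalIntegral.integral_add ((hint_sq.const_mul _).sub (hint_abs.const_mul _))
        (intervalIntegrable_chebW.const_mul _),
      intervalIntegral.integral_sub (hint_sq.const_mul _) (hint_abs.const_mul _),
      intervalIntegral.integral_const_mul, intervalIntegral.integral_const_mul,
      intervalIntegral.integral_const_mul, integral_chebW]
    ring
  have hB : B ^ 2 ≤ π * A := by
    have h0 : 0 ≤ ∫ x in (-1 : ℝ)..1, (π * |h x| - B) ^ 2 * chebW x :=
      intervalIntegral.integral_nonneg (by norm_num) fun x _ =>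
        mul_nonneg (sq_nonneg _) (chebW_nonneg x)
    rw [hexpand] at h0
    nlinarith [pi_pos]
  calc B ≤ |B| := le_abs_self B
    _ ≤ √(π * A) := Real.abs_le_sqrt hB
    _ = √π * √A := Real.sqrt_mul pi_pos.le A

lemma ContinuousOn.intervalIntegrable_ofReal_mul_cexp_mul_chebW {h : ℝ → ℝ}
    (hh : ContinuousOn h (Icc (-1) 1)) (κ : ℝ) :
    IntervalIntegrable (fun x => (h x : ℂ) * Complex.exp (Complex.I * κ * x) * (chebW x : ℂ))
      volume (-1) 1 :=
  (intervalIntegrable_iff_integrableOn_Ioc_of_le (by norm_num)).2 <|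
    IntegrableOn.continuousOn_mul_of_subset (by fun_prop) integrableOn_chebW.ofReal
      isCompact_Icc measurableSet_Ioc Ioc_subset_Icc_self

lemma norm_integral_ofReal_mul_cexp_mul_chebW_le (h : ℝ → ℝ) (κ : ℝ) :
    ‖∫ x in (-1 : ℝ)..1, (h x : ℂ) * Complex.exp (Complex.I * κ * x) * (chebW x : ℂ)‖ ≤
      ∫ x in (-1 : ℝ)..1, |h x| * chebW x := by
  refine (intervalIntegral.norm_integral_le_integral_norm (by norm_num)).trans_eq
    (intervalIntegral.integral_congr fun x _ => ?_)
  simp [Complex.norm_exp, abs_of_nonneg (chebW_nonneg x)]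

theorem covariance_truncation_bound_general
    (g : ℝ → ℝ)
    (a : ℕ → ℝ)
    (habs : ∀ x ∈ Set.Icc (-1:ℝ) 1, Summable fun n : ℕ => |a n * chebT n x|)
    (hexp : ∀ x ∈ Set.Icc (-1:ℝ) 1, HasSum (fun n : ℕ => a n * chebT n x) (g x))
    (p : ℕ) :
    (∀ κ : ℝ,
      ‖(∫ x in (-1:ℝ)..1, (g x : ℂ) * Complex.exp (Complex.I * κ * x) * (chebW x : ℂ)) -
        (∫ x in (-1:ℝ)..1,
          ((∑ n ∈ Finset.range (p + 1), a n * chebT n x : ℝ) : ℂ) *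
            Complex.exp (Complex.I * κ * x) * (chebW x : ℂ))‖ ≤
        (Real.pi / Real.sqrt 2) * Real.sqrt (∑' n : ℕ, (a (n + p + 1)) ^ 2)) ∧
    (Real.pi / Real.sqrt 2) * Real.sqrt (∑' n : ℕ, (a (n + p + 1)) ^ 2) =
      Real.sqrt Real.pi *
        Real.sqrt (∫ x in (-1:ℝ)..1,
          (g x - ∑ n ∈ Finset.range (p + 1), a n * chebT n x) ^ 2 * chebW x) := by
  set S : ℝ → ℝ := fun x => ∑ n ∈ Finset.range (p + 1), a n * chebT n x
  have ha : Summable fun n => |a n| := by simpa [chebT_one] using habs 1 (by norm_num)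
  have htail (x : ℝ) (hx : x ∈ Icc (-1 : ℝ) 1) :
      HasSum (fun k => a (k + p + 1) * chebT (k + p + 1) x) (g x - S x) := by
    simpa only [add_assoc] using (hasSum_nat_add_iff' (p + 1)).2 (hexp x hx)
  have hS : Continuous S := continuous_finsetSum _ fun n _ => (continuous_chebT n).const_mul _
  have hg : ContinuousOn g (Icc (-1) 1) := continuousOn_of_hasSum_chebT (m := id) ha hexp
  have ha_tail : Summable fun k => |a (k + p + 1)| := by
    simpa only [add_assoc] using (summable_nat_add_iff (p + 1)).2 ha
  have hparseval := hasSum_integral_sq_mul_chebW (fun j k hjk => by simpa using hjk)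
    (fun k => by omega) ha_tail htail
  have hnorm : π / √2 * √(∑' n, a (n + p + 1) ^ 2) =
      √π * √(∫ x in (-1 : ℝ)..1, (g x - S x) ^ 2 * chebW x) := by
    rw [← hparseval.tsum_eq, tsum_mul_left, Real.sqrt_mul (by positivity),
      Real.sqrt_div' _ zero_le_two, ← mul_assoc, ← mul_div_assoc, Real.mul_self_sqrt pi_pos.le]
  refine ⟨fun κ => ?_, hnorm⟩
  rw [← intervalIntegral.integral_sub (hg.intervalIntegrable_ofReal_mul_cexp_mul_chebW κ)
    (hS.continuousOn.intervalIntegrable_ofReal_mul_cexp_mul_chebW κ)]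
  calc _ = ‖∫ x in (-1 : ℝ)..1,
          ((g x - S x : ℝ) : ℂ) * Complex.exp (Complex.I * κ * x) * (chebW x : ℂ)‖ := by
        simp only [Complex.ofReal_sub, sub_mul]
    _ ≤ ∫ x in (-1 : ℝ)..1, |g x - S x| * chebW x :=
        norm_integral_ofReal_mul_cexp_mul_chebW_le (fun x => g x - S x) κ
    _ ≤ √π * √(∫ x in (-1 : ℝ)..1, (g x - S x) ^ 2 * chebW x) :=
        integral_abs_mul_chebW_le (hg.sub hS.continuousOn)
    _ = _ := hnorm.symm

theorem covariance_truncation_bound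
    (g : ℝ → ℝ) (L : NNReal) (hg : LipschitzOnWith L g (Set.Icc (-1:ℝ) 1))
    (a : ℕ → ℝ)
    (ha : ∀ n : ℕ, a n = ((2 - if n = 0 then (1:ℝ) else 0) / Real.pi) *
      ∫ x in (-1:ℝ)..1, g x * chebT n x * chebW x)
    (habs : ∀ x ∈ Set.Icc (-1:ℝ) 1, Summable fun n : ℕ => |a n * chebT n x|)
    (hexp : ∀ x ∈ Set.Icc (-1:ℝ) 1, HasSum (fun n : ℕ => a n * chebT n x) (g x))
    (p : ℕ) :
    (∀ κ : ℝ,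
      ‖(∫ x in (-1:ℝ)..1, (g x : ℂ) * Complex.exp (Complex.I * κ * x) * (chebW x : ℂ)) -
        (∫ x in (-1:ℝ)..1,
          ((∑ n ∈ Finset.range (p + 1), a n * chebT n x : ℝ) : ℂ) *
            Complex.exp (Complex.I * κ * x) * (chebW x : ℂ))‖ ≤
        (Real.pi / Real.sqrt 2) * Real.sqrt (∑' n : ℕ, (a (n + p + 1)) ^ 2)) ∧
    (Real.pi / Real.sqrt 2) * Real.sqrt (∑' n : ℕ, (a (n + p + 1)) ^ 2) =
      Real.sqrt Real.pi *
        Real.sqrt (∫ x in (-1:ℝ)..1,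
          (g x - ∑ n ∈ Finset.range (p + 1), a n * chebT n x) ^ 2 * chebW x) :=
  covariance_truncation_bound_general g a habs hexp p
end

section
/- (Markov–Lukács) Let $p$ be an odd natural number and let $g$ be a real polynomial of degree at most $p$ with $g(x) \ge 0$ for all $x \in [-1,1]$. Then there exist real polynomials $f, h$ of degree at most $(p-1)/2$ such that $g(x) = (1+x) f(x)^2 + (1-x) h(x)^2$ for all $x$. -/
/-!
Induct on `m` for `deg g ≤ 2m + 1`. If `deg g ≥ 2`, then `g` has a real quadratic factor `Q`
that is nonnegative on `[-1, 1]`: `(x - t)²` for a root `t ∈ (-1, 1)` (which is a double root,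
since `g ≥ 0` around it), or otherwise any quadratic factor, which has no root in `(-1, 1)` and
hence constant sign there. The cofactor is then nonnegative on `[-1, 1]` too, by density of the
complement of the roots of `Q`. Every such quadratic has the form `(αx + β)² + (1 - x²)γ²`,
and the identity
`(L² + (1 - x²)Γ²)((1 + x)f² + (1 - x)h²) = (1 + x)(Lf - (1 - x)Γh)² + (1 - x)(Lh + (1 + x)Γf)²`
raises the degree bound of a representation by one.
-/

open Polynomial Set

theorem nonneg_on_Icc_of_nonneg_on_Ioo_diff {f : ℝ → ℝ} (hf : Continuous f) {a b : ℝ}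
    (hab : a < b) {F : Set ℝ} (hF : F.Finite) (h : ∀ x ∈ Ioo a b \ F, 0 ≤ f x) :
    ∀ x ∈ Icc a b, 0 ≤ f x := by
  have hsub : Icc a b ⊆ closure (Ioo a b ∩ Fᶜ) := by
    rw [← closure_Ioo hab.ne]
    exact closure_minimal ((hF.countable.dense_compl ℝ).open_subset_closure_inter isOpen_Ioo)
      isClosed_closure
  exact fun x hx => closure_minimal h (isClosed_le continuous_const hf) (hsub hx)

theorem nonneg_or_nonpos_on_Icc {f : ℝ → ℝ} (hf : Continuous f) {a b : ℝ} (hab : a < b)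
    (h : ∀ x ∈ Ioo a b, f x ≠ 0) :
    (∀ x ∈ Icc a b, 0 ≤ f x) ∨ ∀ x ∈ Icc a b, f x ≤ 0 := by
  have hIoo : (∀ x ∈ Ioo a b, 0 ≤ f x) ∨ ∀ x ∈ Ioo a b, f x ≤ 0 := by
    by_contra! ⟨⟨x, hx, hfx⟩, y, hy, hfy⟩
    obtain ⟨z, hz, hfz⟩ :=
      isPreconnected_Ioo.intermediate_value hx hy hf.continuousOn ⟨hfx.le, hfy.le⟩
    exact h z hz hfz
  refine hIoo.imp (fun hpos => ?_) fun hneg => ?_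
  · exact nonneg_on_Icc_of_nonneg_on_Ioo_diff hf hab finite_empty fun x hx => hpos x hx.1
  · simpa using nonneg_on_Icc_of_nonneg_on_Ioo_diff hf.neg hab finite_empty
      fun x hx => neg_nonneg.2 (hneg x hx.1)

namespace Polynomial

theorem nonneg_on_Icc_of_mul_nonneg {Q r : ℝ[X]} (hQ0 : Q ≠ 0) {a b : ℝ} (hab : a < b)
    (hQ : ∀ x ∈ Icc a b, 0 ≤ Q.eval x) (h : ∀ x ∈ Icc a b, 0 ≤ (Q * r).eval x) :
    ∀ x ∈ Icc a b, 0 ≤ r.eval x := by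
  refine nonneg_on_Icc_of_nonneg_on_Ioo_diff r.continuous hab (finite_setOfPred_isRoot hQ0) ?_
  rintro x ⟨hx, hxQ⟩
  have hx' := Ioo_subset_Icc_self hx
  exact nonneg_of_mul_nonneg_right (by simpa only [eval_mul] using h x hx')
    ((hQ x hx').lt_of_ne (Ne.symm hxQ))

theorem sq_dvd_of_isRoot_of_isLocalMin {p : ℝ[X]} {t : ℝ} (hroot : p.IsRoot t)
    (hmin : IsLocalMin (fun x => p.eval x) t) : (X - C t) ^ 2 ∣ p := by
  rcases eq_or_ne p 0 with rfl | hp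
  · exact dvd_zero _
  rw [← le_rootMultiplicity_iff hp]
  exact (one_lt_rootMultiplicity_iff_isRoot hp).2
    ⟨hroot, by simpa only [Polynomial.deriv, IsRoot.def] using hmin.deriv_eq_zero⟩

theorem exists_natDegree_eq_two_dvd {g : ℝ[X]} (hg : 2 ≤ g.natDegree) :
    ∃ Q r : ℝ[X], Q.natDegree = 2 ∧ g = Q * r := by
  have hg0 : g ≠ 0 := by rintro rfl; simp at hg
  obtain ⟨n, hn⟩ := Nat.exists_eq_add_of_le' hg
  have hmonic : IsMonicOfDegree (g * C g.leadingCoeff⁻¹) (n + 2) :=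
    ⟨by rw [natDegree_mul_C (inv_ne_zero (leadingCoeff_ne_zero.2 hg0)), hn],
      monic_mul_leadingCoeff_inv hg0⟩
  obtain ⟨Q, r, hQ, -, hQr⟩ := hmonic.eq_isMonicOfDegree_two_mul_isMonicOfDegree
  refine ⟨Q, r * C g.leadingCoeff, hQ.natDegree_eq, ?_⟩
  rw [← mul_assoc, ← hQr, mul_assoc, ← C_mul, inv_mul_cancel₀ (leadingCoeff_ne_zero.2 hg0),
    C_1, mul_one]

theorem exists_quadratic_dvd_nonneg_on_Icc {g : ℝ[X]} (hdeg : 2 ≤ g.natDegree)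
    (hnn : ∀ x ∈ Icc (-1 : ℝ) 1, 0 ≤ g.eval x) :
    ∃ Q r : ℝ[X], g = Q * r ∧ Q.natDegree = 2 ∧ ∀ x ∈ Icc (-1 : ℝ) 1, 0 ≤ Q.eval x := by
  by_cases hroot : ∃ t ∈ Ioo (-1 : ℝ) 1, g.IsRoot t
  · obtain ⟨t, ht, hroot⟩ := hroot
    have hmin : IsLocalMin (fun x => g.eval x) t := by
      filter_upwards [isOpen_Ioo.mem_nhds ht] with x hx
      rw [hroot]
      exact hnn x (Ioo_subset_Icc_self hx)
    obtain ⟨r, hr⟩ := sq_dvd_of_isRoot_of_isLocalMin hroot hmin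
    exact ⟨_, r, hr, by simp [natDegree_pow], fun x _ => by simp only [eval_pow]; positivity⟩
  push Not at hroot
  obtain ⟨Q, r, hQ, rfl⟩ := exists_natDegree_eq_two_dvd hdeg
  have hQ0 : ∀ x ∈ Ioo (-1 : ℝ) 1, Q.eval x ≠ 0 := fun x hx h0 =>
    hroot x hx (by simp [IsRoot.def, h0])
  rcases nonneg_or_nonpos_on_Icc Q.continuous (by norm_num) hQ0 with hpos | hneg
  · exact ⟨Q, r, rfl, hQ, hpos⟩
  · exact ⟨-Q, -r, by ring, by rwa [natDegree_neg], fun x hx => by simpa using hneg x hx⟩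

theorem exists_eq_sq_add_one_sub_sq_mul_sq {Q : ℝ[X]} (hdeg : Q.natDegree ≤ 2)
    (hnn : ∀ x ∈ Icc (-1 : ℝ) 1, 0 ≤ Q.eval x) :
    ∃ (L : ℝ[X]) (γ : ℝ), L.natDegree ≤ 1 ∧ Q = L ^ 2 + (1 - X ^ 2) * C γ ^ 2 := by
  have hQ := eq_quadratic_of_degree_le_two (natDegree_le_iff_degree_le.1 hdeg)
  set a := Q.coeff 2
  set b := Q.coeff 1
  set c := Q.coeff 0
  have heval : ∀ x, Q.eval x = a * x ^ 2 + b * x + c := fun x => by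
    rw [hQ]; simp
  have h1 : 0 ≤ a + b + c := by simpa [heval] using hnn 1 (by norm_num)
  have h2 : 0 ≤ a - b + c := by linarith [heval (-1), hnn (-1) (by norm_num)]
  -- when `c < a`, the vertex `-b / (2a)` of the parabola lies in `[-1, 1]`
  have hvertex : c < a → b ^ 2 ≤ 4 * a * c := fun hca => by
    have ha : 0 < a := by linarith
    have hx₀ : 2 * a * (-b / (2 * a)) = -b := by field_simp
    have hmem : -b / (2 * a) ∈ Icc (-1 : ℝ) 1 := by
      constructor <;> nlinarith
    nlinarith [hnn _ hmem, heval (-b / (2 * a))]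
  -- `L = αX + β` with `α ± β = √Q(±1)`, so that `α² + β² = a + c` and `2αβ = b`
  set u := √(a + b + c)
  set v := √(a - b + c)
  have hu : u ^ 2 = a + b + c := Real.sq_sqrt h1
  have hv : v ^ 2 = a - b + c := Real.sq_sqrt h2
  have huv : 0 ≤ u * v := mul_nonneg (Real.sqrt_nonneg _) (Real.sqrt_nonneg _)
  have hα : 4 * a ≤ (u + v) ^ 2 := by
    rcases le_or_gt a c with hac | hca
    · nlinarith
    · have : a - c ≤ u * v := by nlinarith [hvertex hca]
      nlinarith
  obtain ⟨γ, hγ⟩ : ∃ γ : ℝ, γ ^ 2 = ((u + v) / 2) ^ 2 - a := ⟨_, Real.sq_sqrt (by linarith)⟩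
  refine ⟨C ((u + v) / 2) * X + C ((u - v) / 2), γ, by compute_degree, ?_⟩
  have ha : a = ((u + v) / 2) ^ 2 - γ ^ 2 := by linarith
  have hb : b = 2 * ((u + v) / 2) * ((u - v) / 2) := by linear_combination (hv - hu) / 2
  have hc : c = ((u - v) / 2) ^ 2 + γ ^ 2 := by linear_combination -(hu + hv) / 2 - hγ
  rw [hQ, ha, hb, hc]
  simp only [map_add, map_sub, map_mul, map_pow, map_ofNat]
  ring

def HasLukacsRep (m : ℕ) (g : ℝ[X]) : Prop :=
  ∃ f h : ℝ[X], f.natDegree ≤ m ∧ h.natDegree ≤ m ∧ g = (1 + X) * f ^ 2 + (1 - X) * h ^ 2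

namespace HasLukacsRep

theorem mono {m n : ℕ} {g : ℝ[X]} (hg : HasLukacsRep m g) (hmn : m ≤ n) : HasLukacsRep n g :=
  let ⟨f, h, hf, hh, hfh⟩ := hg
  ⟨f, h, hf.trans hmn, hh.trans hmn, hfh⟩

theorem of_natDegree_le_one {g : ℝ[X]} (hdeg : g.natDegree ≤ 1)
    (hnn : ∀ x ∈ Icc (-1 : ℝ) 1, 0 ≤ g.eval x) : HasLukacsRep 0 g := by
  obtain ⟨a, b, rfl⟩ : ∃ a b : ℝ, g = C a * X + C b :=
    ⟨_, _, eq_X_add_C_of_natDegree_le_one hdeg⟩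
  have h1 : 0 ≤ (a + b) / 2 := by linarith [show 0 ≤ a + b by simpa using hnn 1 (by norm_num)]
  have h2 : 0 ≤ (b - a) / 2 := by
    have := hnn (-1) (by norm_num)
    simp only [eval_add, eval_mul, eval_C, eval_X] at this
    linarith
  refine ⟨C √((a + b) / 2), C √((b - a) / 2), by simp, by simp, funext fun x => ?_⟩
  simp only [eval_add, eval_sub, eval_mul, eval_pow, eval_C, eval_X, eval_one,
    Real.sq_sqrt h1, Real.sq_sqrt h2]
  ring

theorem mul_sq_add_one_sub_sq_mul_sq {m k : ℕ} {r L Γ : ℝ[X]} (hr : HasLukacsRep m r)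
    (hL : L.natDegree ≤ k + 1) (hΓ : Γ.natDegree ≤ k) :
    HasLukacsRep (m + k + 1) ((L ^ 2 + (1 - X ^ 2) * Γ ^ 2) * r) := by
  obtain ⟨f, h, hf, hh, rfl⟩ := hr
  have h1X : (1 + X : ℝ[X]).natDegree ≤ 1 := by compute_degree
  have h1X' : (1 - X : ℝ[X]).natDegree ≤ 1 := by compute_degree
  refine ⟨L * f - (1 - X) * (Γ * h), L * h + (1 + X) * (Γ * f), ?_, ?_, by ring⟩
  · refine (natDegree_sub_le_of_le (natDegree_mul_le_of_le hL hf)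
      (natDegree_mul_le_of_le h1X' (natDegree_mul_le_of_le hΓ hh))).trans ?_
    omega
  · refine natDegree_add_le_of_degree_le ((natDegree_mul_le_of_le hL hh).trans (by omega))
      ((natDegree_mul_le_of_le h1X (natDegree_mul_le_of_le hΓ hf)).trans (by omega))

end HasLukacsRep

theorem hasLukacsRep_of_nonneg_on_Icc :
    ∀ (m : ℕ) {g : ℝ[X]}, g.natDegree ≤ 2 * m + 1 →
      (∀ x ∈ Icc (-1 : ℝ) 1, 0 ≤ g.eval x) → HasLukacsRep m g
  | 0, _, hdeg, hnn => .of_natDegree_le_one hdeg hnn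
  | m + 1, g, hdeg, hnn => by
    by_cases hlow : g.natDegree ≤ 2 * m + 1
    · exact (hasLukacsRep_of_nonneg_on_Icc m hlow hnn).mono m.le_succ
    obtain ⟨Q, r, rfl, hQdeg, hQnn⟩ := exists_quadratic_dvd_nonneg_on_Icc (by omega) hnn
    have hQ0 : Q ≠ 0 := by rintro rfl; simp at hQdeg
    have hr0 : r ≠ 0 := by rintro rfl; simp at hlow
    have hrdeg : r.natDegree ≤ 2 * m + 1 := by
      rw [natDegree_mul hQ0 hr0, hQdeg] at hdeg; omega
    have hrnn := nonneg_on_Icc_of_mul_nonneg hQ0 (by norm_num) hQnn hnn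
    obtain ⟨L, γ, hL, rfl⟩ := exists_eq_sq_add_one_sub_sq_mul_sq hQdeg.le hQnn
    exact (hasLukacsRep_of_nonneg_on_Icc m hrdeg hrnn).mul_sq_add_one_sub_sq_mul_sq hL
      (natDegree_C γ).le

end Polynomial

/-- Markov–Lukács theorem: an odd-degree-bounded polynomial nonnegative on `[-1,1]`
is of the form `(1+x) f(x)² + (1-x) h(x)²` with `deg f, deg h ≤ (p-1)/2`. -/
theorem markov_lukacs (p : ℕ) (hp : Odd p) (g : Polynomial ℝ)
    (hdeg : g.natDegree ≤ p) (hnn : ∀ x ∈ Set.Icc (-1:ℝ) 1, 0 ≤ g.eval x) :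
    ∃ f h : Polynomial ℝ, f.natDegree ≤ (p - 1) / 2 ∧ h.natDegree ≤ (p - 1) / 2 ∧
      ∀ x : ℝ, g.eval x = (1 + x) * (f.eval x) ^ 2 + (1 - x) * (h.eval x) ^ 2 := by
  obtain ⟨m, rfl⟩ := hp
  obtain ⟨f, h, hf, hh, rfl⟩ := hasLukacsRep_of_nonneg_on_Icc m hdeg hnn
  exact ⟨f, h, by omega, by omega, fun x => by simp⟩
end

section
/- A real polynomial $g$ of degree at most $p$ (with $p$ odd) is nonnegative on $[-1,1]$ if and only if there exist positive semidefinite matrices $S_1, S_2 \in \mathbb{S}^{(p+1)/2}_+$ such that $g(x) = (1+x)\, T(x)^\top S_1 T(x) + (1-x)\, T(x)^\top S_2 T(x)$ for all $x$, where $T(x) := (T_0(x), \ldots, T_{(p-1)/2}(x))^\top$ is the vector of Chebyshev polynomials of the first kind of degrees up to $(p-1)/2$. -/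
/-!
Markov–Lukács by induction on the degree bound `n`. A real polynomial `g` of degree `n > 0`
has a real root or a pair of conjugate complex roots, hence a factor `w` of one of the shapes
`X - r` (`r ≤ -1`), `r - X` (`r ≥ 1`), `(X - r) ^ 2` (`-1 < r < 1`: an interior root of a
polynomial nonnegative on `[-1, 1]` is a local minimum, hence double) or `(X - r) ^ 2 + s ^ 2`.
Each `w` is positive on `[-1, 1]` off one point, so `g / w` is still nonnegative there, and
multiplication by `w` maps the cone generated by the `(1 + X) ^ a (1 - X) ^ b f ^ 2` (`a, b ≤ 1`)
of degree `≤ n - deg w` into the one of degree `≤ n`.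
For `n = 2k + 1` every generator is `(1 + X) F + (1 - X) H` with `F`, `H` sums of squares of
polynomials of degree `≤ k`, and writing those in the Chebyshev basis `T 0, …, T k` turns each
square `(∑ uᵢ Tᵢ) ^ 2` into the rank-one Gram matrix `u uᵀ`.
-/

open Polynomial Set

lemma Matrix.PosSemidef.sum_mul_mul_nonneg {ι : Type*} [Fintype ι] {S : Matrix ι ι ℝ}
    (hS : S.PosSemidef) (v : ι → ℝ) : 0 ≤ ∑ i, ∑ j, S i j * v i * v j := by
  simpa [dotProduct, Matrix.mulVec, Finset.mul_sum, mul_comm, mul_left_comm, mul_assoc]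
    using hS.dotProduct_mulVec_nonneg v

namespace Polynomial

lemma sq_X_sub_C_dvd_of_isLocalMin {g : ℝ[X]} {r : ℝ} (hr : g.IsRoot r)
    (hmin : IsLocalMin (fun x => g.eval x) r) : (X - C r) ^ 2 ∣ g := by
  rcases eq_or_ne g 0 with rfl | hg
  · exact dvd_zero _
  rw [← le_rootMultiplicity_iff hg]
  exact (one_lt_rootMultiplicity_iff_isRoot hg).2
    ⟨hr, by simpa [Polynomial.deriv] using hmin.deriv_eq_zero⟩

lemma exists_X_sub_C_dvd_or_quadratic_dvd {g : ℝ[X]} (hg : 0 < g.natDegree) :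
    (∃ r, X - C r ∣ g) ∨ ∃ r s : ℝ, s ≠ 0 ∧ (X - C r) ^ 2 + C s ^ 2 ∣ g := by
  obtain ⟨z, hz⟩ := Complex.exists_root (f := g.map (algebraMap ℝ ℂ))
    (by rwa [degree_map, ← natDegree_pos_iff_degree_pos])
  have hz' : aeval z g = 0 := by rwa [aeval_def, eval₂_eq_eval_map]
  by_cases him : z.im = 0
  · left
    refine ⟨z.re, dvd_iff_isRoot.2 ?_⟩
    have hre : algebraMap ℝ ℂ z.re = z := Complex.ext rfl (by simp [him])
    rw [← hre, aeval_algebraMap_apply_eq_algebraMap_eval] at hz'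
    exact (map_eq_zero_iff _ (algebraMap ℝ ℂ).injective).1 hz'
  · right
    refine ⟨z.re, z.im, him, ?_⟩
    convert g.quadratic_dvd_of_aeval_eq_zero_im_ne_zero hz' him using 1
    rw [Complex.sq_norm, Complex.normSq_apply]
    simp only [map_add, map_mul, map_ofNat]
    ring

lemma eval_nonneg_of_eval_mul_nonneg {u v a : ℝ} (huv : u < v) {w q : ℝ[X]}
    (hw : ∀ x ∈ Icc u v, x ≠ a → 0 < w.eval x) (hwq : ∀ x ∈ Icc u v, 0 ≤ (w * q).eval x) :
    ∀ x ∈ Icc u v, 0 ≤ q.eval x := by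
  have hdense : Icc u v ⊆ closure (Ioo u v ∩ {a}ᶜ) := by
    rw [← closure_Ioo huv.ne]
    exact closure_minimal ((dense_compl_singleton a).open_subset_closure_inter isOpen_Ioo)
      isClosed_closure
  refine fun x hx => closure_minimal (fun y hy => ?_)
    (isClosed_le continuous_const q.continuous) (hdense hx)
  have hy' : y ∈ Icc u v := Ioo_subset_Icc_self hy.1
  exact nonneg_of_mul_nonneg_right (by simpa using hwq y hy') (hw y hy' hy.2)

namespace Chebyshev

noncomputable def sequenceT : Sequence ℝ where
  elems' n := T ℝ n
  degree_eq' n := by simp [degree_T]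

lemma mem_span_T {k : ℕ} {f : ℝ[X]} (hf : f.natDegree ≤ k) :
    f ∈ Submodule.span ℝ (range fun i : Fin (k + 1) => T ℝ (i : ℕ)) := by
  have hspan := sequenceT.span_degreeLT (m := k + 1) fun i _ =>
    isUnit_iff_ne_zero.2 (leadingCoeff_ne_zero.2 (sequenceT.ne_zero i))
  have hrange : (range fun i : Fin (k + 1) => T ℝ (i : ℕ)) =
      sequenceT '' Iio (k + 1) := by
    rw [← Fin.range_val, ← range_comp]; rfl
  rw [hrange, hspan, mem_degreeLT]
  exact (degree_le_of_natDegree_le hf).trans_lt (by exact_mod_cast k.lt_succ_self)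

end Chebyshev

end Polynomial

namespace MarkovLukacs

noncomputable def truncatedPreordering (n : ℕ) : AddSubmonoid ℝ[X] :=
  AddSubmonoid.closure
    {g | ∃ a b : ℕ, ∃ f : ℝ[X], a ≤ 1 ∧ b ≤ 1 ∧ a + b + 2 * f.natDegree ≤ n ∧
      g = (1 + X) ^ a * (1 - X) ^ b * f ^ 2}

section truncatedPreordering

variable {m n a b : ℕ} {f g : ℝ[X]}

lemma mem_truncatedPreordering_of_eq (ha : a ≤ 1) (hb : b ≤ 1)
    (hn : a + b + 2 * f.natDegree ≤ n) (hg : g = (1 + X) ^ a * (1 - X) ^ b * f ^ 2) :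
    g ∈ truncatedPreordering n :=
  AddSubmonoid.subset_closure ⟨a, b, f, ha, hb, hn, hg⟩

lemma truncatedPreordering_mono (h : m ≤ n) : truncatedPreordering m ≤ truncatedPreordering n :=
  AddSubmonoid.closure_mono <| by
    rintro _ ⟨a, b, f, ha, hb, hm, rfl⟩
    exact ⟨a, b, f, ha, hb, hm.trans h, rfl⟩

lemma mul_mem_truncatedPreordering {p : ℝ[X]}
    (hp : ∀ (a b : ℕ) (f : ℝ[X]), a ≤ 1 → b ≤ 1 → a + b + 2 * f.natDegree ≤ m →
      p * ((1 + X) ^ a * (1 - X) ^ b * f ^ 2) ∈ truncatedPreordering n)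
    (hg : g ∈ truncatedPreordering m) : p * g ∈ truncatedPreordering n := by
  induction hg using AddSubmonoid.closure_induction with
  | mem _ h => obtain ⟨a, b, f, ha, hb, hm, rfl⟩ := h; exact hp a b f ha hb hm
  | zero => simp
  | add _ _ _ _ h h' => simpa only [mul_add] using add_mem h h'

lemma sq_mul_mem_truncatedPreordering {d : ℕ} {q : ℝ[X]} (hq : q.natDegree ≤ d)
    (hg : g ∈ truncatedPreordering m) : q ^ 2 * g ∈ truncatedPreordering (m + 2 * d) := by
  refine mul_mem_truncatedPreordering (fun a b f ha hb hm => ?_) hg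
  have hqf : (q * f).natDegree ≤ d + f.natDegree := natDegree_mul_le.trans (by omega)
  exact mem_truncatedPreordering_of_eq (f := q * f) ha hb (by omega) (by ring)

lemma C_mul_mem_truncatedPreordering {c : ℝ} (hc : 0 ≤ c) (hg : g ∈ truncatedPreordering m) :
    C c * g ∈ truncatedPreordering m := by
  simpa [← C_pow, Real.sq_sqrt hc] using
    sq_mul_mem_truncatedPreordering (natDegree_C (√c)).le hg

lemma C_mem_truncatedPreordering {c : ℝ} (hc : 0 ≤ c) : C c ∈ truncatedPreordering 0 := by
  simpa using C_mul_mem_truncatedPreordering hc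
    (mem_truncatedPreordering_of_eq (g := 1) (a := 0) (b := 0) (f := 1) zero_le_one zero_le_one
      (by simp) (by simp))

lemma one_add_X_mul_mem_truncatedPreordering (hg : g ∈ truncatedPreordering m) :
    (1 + X) * g ∈ truncatedPreordering (m + 1) := by
  refine mul_mem_truncatedPreordering (fun a b f ha hb hm => ?_) hg
  interval_cases a
  · exact mem_truncatedPreordering_of_eq (a := 1) (f := f) le_rfl hb (by omega) (by ring)
  · have hf : ((1 + X) * f).natDegree ≤ 1 + f.natDegree :=
      natDegree_mul_le.trans (by gcongr; compute_degree!)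
    exact mem_truncatedPreordering_of_eq (a := 0) (f := (1 + X) * f) zero_le_one hb (by omega)
      (by ring)

lemma one_sub_X_mul_mem_truncatedPreordering (hg : g ∈ truncatedPreordering m) :
    (1 - X) * g ∈ truncatedPreordering (m + 1) := by
  refine mul_mem_truncatedPreordering (fun a b f ha hb hm => ?_) hg
  interval_cases b
  · exact mem_truncatedPreordering_of_eq (b := 1) (f := f) ha le_rfl (by omega) (by ring)
  · have hf : ((1 - X) * f).natDegree ≤ 1 + f.natDegree :=
      natDegree_mul_le.trans (by gcongr; compute_degree!)
    exact mem_truncatedPreordering_of_eq (b := 0) (f := (1 - X) * f) ha zero_le_one (by omega)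
      (by ring)

lemma X_sub_C_mul_mem_truncatedPreordering {r : ℝ} (hr : r ≤ -1)
    (hg : g ∈ truncatedPreordering m) : (X - C r) * g ∈ truncatedPreordering (m + 1) := by
  have h : (X - C r) * g = (1 + X) * g + C (-1 - r) * g := by
    simp only [map_sub, map_neg, map_one]; ring
  rw [h]
  exact add_mem (one_add_X_mul_mem_truncatedPreordering hg)
    (truncatedPreordering_mono m.le_succ (C_mul_mem_truncatedPreordering (by linarith) hg))

lemma C_sub_X_mul_mem_truncatedPreordering {r : ℝ} (hr : 1 ≤ r)
    (hg : g ∈ truncatedPreordering m) : (C r - X) * g ∈ truncatedPreordering (m + 1) := by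
  have h : (C r - X) * g = (1 - X) * g + C (r - 1) * g := by
    simp only [map_sub, map_one]; ring
  rw [h]
  exact add_mem (one_sub_X_mul_mem_truncatedPreordering hg)
    (truncatedPreordering_mono m.le_succ (C_mul_mem_truncatedPreordering (by linarith) hg))

lemma quadratic_mul_mem_truncatedPreordering (r s : ℝ) (hg : g ∈ truncatedPreordering m) :
    ((X - C r) ^ 2 + C s ^ 2) * g ∈ truncatedPreordering (m + 2) := by
  rw [add_mul]
  have hr := sq_mul_mem_truncatedPreordering (natDegree_X_sub_C r).le hg
  have hs := sq_mul_mem_truncatedPreordering (natDegree_C s).le hg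
  exact add_mem (truncatedPreordering_mono (by omega) hr) (truncatedPreordering_mono (by omega) hs)

end truncatedPreordering

theorem mem_truncatedPreordering_of_nonneg {n : ℕ} {g : ℝ[X]} (hdeg : g.natDegree ≤ n)
    (hg : ∀ x ∈ Icc (-1 : ℝ) 1, 0 ≤ g.eval x) : g ∈ truncatedPreordering n := by
  induction n using Nat.strong_induction_on generalizing g with
  | _ n ih =>
  rcases hdeg.lt_or_eq with hlt | hn
  · obtain ⟨m, rfl⟩ : ∃ m, n = m + 1 := ⟨n - 1, by omega⟩
    exact truncatedPreordering_mono m.le_succ (ih m m.lt_succ_self (by omega) hg)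
  rcases Nat.eq_zero_or_pos n with rfl | hpos
  · rw [eq_C_of_natDegree_eq_zero hn]
    exact C_mem_truncatedPreordering (by simpa [coeff_zero_eq_eval_zero] using hg 0 (by simp))
  have descend : ∀ {w q : ℝ[X]} {d : ℕ} (a : ℝ), g = w * q → w.natDegree = d → 0 < d →
      (∀ x ∈ Icc (-1 : ℝ) 1, x ≠ a → 0 < w.eval x) →
      ∃ m, n = m + d ∧ q ∈ truncatedPreordering m := by
    rintro w q d a rfl rfl hd hw
    have hwq : w ≠ 0 ∧ q ≠ 0 := mul_ne_zero_iff.1 (by rintro h; simp [h] at hn; omega)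
    rw [natDegree_mul hwq.1 hwq.2] at hn
    exact ⟨q.natDegree, hn.symm.trans (add_comm _ _),
      ih _ (by omega) le_rfl (eval_nonneg_of_eval_mul_nonneg (by norm_num) hw hg)⟩
  rcases exists_X_sub_C_dvd_or_quadratic_dvd (hn ▸ hpos) with ⟨r, q, hq⟩ | ⟨r, s, hs, q, hq⟩
  · rcases le_or_gt r (-1) with hr | hr
    · obtain ⟨m, rfl, hqm⟩ := descend (-1) hq (natDegree_X_sub_C r) one_pos fun x hx hx1 => by
        simp only [eval_sub, eval_X, eval_C]
        linarith [lt_of_le_of_ne hx.1 (Ne.symm hx1)]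
      exact hq ▸ X_sub_C_mul_mem_truncatedPreordering hr hqm
    rcases lt_or_ge r 1 with hr' | hr'
    · obtain ⟨q, hq⟩ : (X - C r) ^ 2 ∣ g := by
        refine sq_X_sub_C_dvd_of_isLocalMin (dvd_iff_isRoot.1 ⟨q, hq⟩) ?_
        filter_upwards [Ioo_mem_nhds hr hr'] with x hx
        simpa [hq] using hg x (Ioo_subset_Icc_self hx)
      obtain ⟨m, rfl, hqm⟩ := descend r hq (by simp) two_pos fun x _ hxr => by
        have : x - r ≠ 0 := sub_ne_zero.2 hxr
        simp only [eval_pow, eval_sub, eval_X, eval_C]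
        positivity
      exact hq ▸ truncatedPreordering_mono (by omega)
        (sq_mul_mem_truncatedPreordering (natDegree_X_sub_C r).le hqm)
    · have hq' : g = (C r - X) * -q := by rw [hq]; ring
      obtain ⟨m, rfl, hqm⟩ := descend 1 hq' (by compute_degree!) one_pos fun x hx hx1 => by
        simp only [eval_sub, eval_X, eval_C]
        linarith [lt_of_le_of_ne hx.2 hx1]
      exact hq' ▸ C_sub_X_mul_mem_truncatedPreordering hr' hqm
  · obtain ⟨m, rfl, hqm⟩ := descend 0 hq (by compute_degree!) two_pos fun x _ _ => by
      simp only [eval_add, eval_pow, eval_sub, eval_X, eval_C]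
      positivity
    exact hq ▸ quadratic_mul_mem_truncatedPreordering r s hqm

section gramCone

variable {ι : Type*} [Fintype ι] {b : ι → ℝ[X]} {F : ℝ[X]}

noncomputable def gramCone (b : ι → ℝ[X]) : AddSubmonoid ℝ[X] where
  carrier := {F | ∃ S : Matrix ι ι ℝ, S.PosSemidef ∧ F = ∑ i, ∑ j, C (S i j) * b i * b j}
  zero_mem' := ⟨0, .zero, by simp⟩
  add_mem' := by
    rintro _ _ ⟨S, hS, rfl⟩ ⟨S', hS', rfl⟩
    exact ⟨S + S', hS.add hS', by simp only [Matrix.add_apply, map_add, add_mul,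
      Finset.sum_add_distrib]⟩

lemma C_mul_mem_gramCone {c : ℝ} (hc : 0 ≤ c) (hF : F ∈ gramCone b) : C c * F ∈ gramCone b := by
  obtain ⟨S, hS, rfl⟩ := hF
  exact ⟨c • S, hS.smul hc, by simp only [Finset.mul_sum, Matrix.smul_apply, smul_eq_mul,
    map_mul, mul_assoc]⟩

lemma sq_mem_gramCone {f : ℝ[X]} (hf : f ∈ Submodule.span ℝ (range b)) : f ^ 2 ∈ gramCone b := by
  obtain ⟨u, rfl⟩ := (Submodule.mem_span_range_iff_exists_fun ℝ).1 hf
  refine ⟨Matrix.vecMulVec u u, by simpa using Matrix.posSemidef_vecMulVec_self_star u, ?_⟩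
  simp only [sq, Finset.sum_mul_sum, Matrix.vecMulVec_apply, map_mul, smul_eq_C_mul]
  refine Finset.sum_congr rfl fun i _ => Finset.sum_congr rfl fun j _ => by ring

end gramCone

theorem exists_eq_one_add_X_mul_add_one_sub_X_mul {ι : Type*} [Fintype ι] {b : ι → ℝ[X]}
    {k : ℕ} (hb : ∀ f : ℝ[X], f.natDegree ≤ k → f ∈ Submodule.span ℝ (range b)) {g : ℝ[X]}
    (hg : g ∈ truncatedPreordering (2 * k + 1)) :
    ∃ F ∈ gramCone b, ∃ H ∈ gramCone b, g = (1 + X) * F + (1 - X) * H := by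
  induction hg using AddSubmonoid.closure_induction with
  | mem _ h =>
    obtain ⟨a, a', f, ha, ha', hdeg, rfl⟩ := h
    have half : ∀ p : ℝ[X], p.natDegree ≤ k → C (1 / 2) * p ^ 2 ∈ gramCone b := fun p hp =>
      C_mul_mem_gramCone (by norm_num) (sq_mem_gramCone (hb p hp))
    have two_half : (2 : ℝ[X]) * C (1 / 2) = 1 := by rw [← C_ofNat, ← C_mul]; norm_num
    have hdeg_mul : ∀ p : ℝ[X], p.natDegree ≤ 1 → (p * f).natDegree ≤ 1 + f.natDegree :=
      fun p hp => natDegree_mul_le.trans (by omega)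
    interval_cases a <;> interval_cases a'
    · exact ⟨_, half f (by omega), _, half f (by omega), by linear_combination (-f ^ 2) * two_half⟩
    · exact ⟨0, zero_mem _, f ^ 2, sq_mem_gramCone (hb f (by omega)), by ring⟩
    · exact ⟨f ^ 2, sq_mem_gramCone (hb f (by omega)), 0, zero_mem _, by ring⟩
    · -- `1 - X ^ 2 = ((1 + X) (1 - X) ^ 2 + (1 - X) (1 + X) ^ 2) / 2`
      have hplus := hdeg_mul (1 + X) (by compute_degree!)
      have hminus := hdeg_mul (1 - X) (by compute_degree!)
      exact ⟨_, half ((1 - X) * f) (by omega), _, half ((1 + X) * f) (by omega),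
        by linear_combination (-(1 - X ^ 2) * f ^ 2) * two_half⟩
  | zero => exact ⟨0, zero_mem _, 0, zero_mem _, by ring⟩
  | add _ _ _ _ h h' =>
    obtain ⟨F, hF, H, hH, rfl⟩ := h
    obtain ⟨F', hF', H', hH', rfl⟩ := h'
    exact ⟨F + F', add_mem hF hF', H + H', add_mem hH hH', by ring⟩

end MarkovLukacs

open MarkovLukacs

/-- Semidefinite characterization of polynomials nonnegative on `[-1,1]`
in the Chebyshev basis: for odd `p`, `g` of degree ≤ `p` is nonnegative on `[-1,1]`
iff `g(x) = (1+x) T(x)ᵀ S₁ T(x) + (1-x) T(x)ᵀ S₂ T(x)` for some PSD `S₁, S₂`. -/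
theorem nonneg_iff_chebyshev_sdp (p : ℕ) (hp : Odd p) (g : Polynomial ℝ)
    (hdeg : g.natDegree ≤ p) :
    (∀ x ∈ Set.Icc (-1:ℝ) 1, 0 ≤ g.eval x) ↔
      ∃ S₁ S₂ : Matrix (Fin ((p + 1) / 2)) (Fin ((p + 1) / 2)) ℝ,
        S₁.PosSemidef ∧ S₂.PosSemidef ∧
        ∀ x : ℝ, g.eval x =
          (1 + x) * (∑ i, ∑ j, S₁ i j *
            (Polynomial.Chebyshev.T ℝ (i : ℕ)).eval x *
            (Polynomial.Chebyshev.T ℝ (j : ℕ)).eval x) +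
          (1 - x) * (∑ i, ∑ j, S₂ i j *
            (Polynomial.Chebyshev.T ℝ (i : ℕ)).eval x *
            (Polynomial.Chebyshev.T ℝ (j : ℕ)).eval x) := by
  obtain ⟨k, rfl⟩ := hp
  rw [show (2 * k + 1 + 1) / 2 = k + 1 by omega]
  constructor
  · intro hg
    obtain ⟨_, ⟨S₁, hS₁, rfl⟩, _, ⟨S₂, hS₂, rfl⟩, hFH⟩ :=
      exists_eq_one_add_X_mul_add_one_sub_X_mul (fun _ => Chebyshev.mem_span_T)
        (mem_truncatedPreordering_of_nonneg hdeg hg)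
    exact ⟨S₁, S₂, hS₁, hS₂, fun x => by simp [hFH, eval_finsetSum]⟩
  · rintro ⟨S₁, S₂, hS₁, hS₂, hg⟩ x ⟨hx₁, hx₂⟩
    rw [hg]
    exact add_nonneg (mul_nonneg (by linarith) (hS₁.sum_mul_mul_nonneg _))
      (mul_nonneg (by linarith) (hS₂.sum_mul_mul_nonneg _))
end
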